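/- The 4×4 real matrix M = [[-3,√3,0,0],[-√3,-1,2,0],[0,-2,1,√3],[0,0,-√3,3]] is nilpotent of index exactly 4, i.e. M⁴ = 0 and M³ ≠ 0. -/

import Mathlib

open Matrix Real

noncomputable def M2 : Matrix (Fin 4) (Fin 4) ℝ :=
  !![-3, Real.sqrt 3, 0, 0;
     -Real.sqrt 3, -1, 2, 0;
     0, -2, 1, Real.sqrt 3;
     0, 0, -Real.sqrt 3, 3]

lemma sqrt_three_mul_self : √3 * √3 = 3 := mul_self_sqrt (by norm_num)

lemma M2_sq : M2 ^ 2 =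
    !![6, -4 * √3, 2 * √3, 0;
       4 * √3, -6, 0, 2 * √3;
       2 * √3, 0, -6, 4 * √3;
       0, 2 * √3, -4 * √3, 6] := by
  ext i j
  fin_cases i <;> fin_cases j <;>
    simp [M2, sq, mul_apply, Fin.sum_univ_four] <;> linarith [sqrt_three_mul_self]

lemma M2_sq_sq : (M2 ^ 2) ^ 2 = 0 := by
  rw [M2_sq]
  ext i j
  fin_cases i <;> fin_cases j <;>
    simp [sq, mul_apply, Fin.sum_univ_four] <;> linarith [sqrt_three_mul_self]

lemma M2_pow_three_apply_zero_zero : (M2 ^ 3) 0 0 = -6 := by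
  rw [pow_succ, M2_sq]
  simp only [M2, mul_apply, Fin.sum_univ_four, of_apply, cons_val', cons_val_fin_one,
    cons_val_zero, cons_val_one, cons_val, neg_mul, mul_neg, neg_neg, mul_zero, add_zero]
  linarith [sqrt_three_mul_self]

theorem stmt_2 : M2 ^ 4 = 0 ∧ M2 ^ 3 ≠ 0 := by
  refine ⟨by rw [← M2_sq_sq, ← pow_mul], fun h => ?_⟩
  simpa [h] using M2_pow_three_apply_zero_zero
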